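/- arXiv:2306.12883 — 4 statements merged into one kernel-verified Lean document; each statement's English description precedes it below -/
import Mathlib

section
/- Let G be a finite group and g ∈ G. Every generator of the cyclic subgroup ⟨g⟩ is conjugate in G to g if and only if the index of the centralizer C_G(g) in the normalizer N_G(⟨g⟩) equals φ(|g|), where φ is Euler's totient function and |g| is the order of g. -/
open Subgroup

private lemma zpowers_conj_of_mem_normalizer {G : Type} [Group G] {g n : G}
    (hn : n ∈ normalizer (zpowers g : Set G)) : zpowers (n * g * n⁻¹) = zpowers g := by
  have h1 : zpowers (n * g * n⁻¹) = (zpowers g).map (MulAut.conj n).toMonoidHom := by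
    rw [MonoidHom.map_zpowers]; rfl
  rw [h1]
  ext x
  simp only [Subgroup.mem_map, MulEquiv.coe_toMonoidHom, MulAut.conj_apply]
  constructor
  · rintro ⟨y, hy, rfl⟩; exact (Subgroup.mem_normalizer_iff.mp hn y).mp hy
  · intro hx
    exact ⟨n⁻¹ * x * n, by simpa using (Subgroup.mem_normalizer_iff''.mp hn x).mp hx, by group⟩

private lemma mem_normalizer_of_conj {G : Type} [Group G] {g c : G}
    (hzp : zpowers (c * g * c⁻¹) = zpowers g) : c ∈ normalizer (zpowers g : Set G) := by
  have hmap : (zpowers g).map (MulAut.conj c).toMonoidHom = zpowers g := by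
    rw [MonoidHom.map_zpowers]; exact hzp
  rw [Subgroup.mem_normalizer_iff]
  intro x
  constructor
  · intro hx
    have := Subgroup.mem_map_of_mem (MulAut.conj c).toMonoidHom hx
    rw [hmap] at this
    simpa using this
  · intro hx
    rw [← hmap, Subgroup.mem_map_equiv] at hx
    simpa [MulAut.conj_symm_apply, mul_assoc] using hx

private lemma card_generators {G : Type} [Group G] [Finite G] (g : G) :
    Nat.card {h : G // zpowers h = zpowers g} = Nat.totient (orderOf g) := by
  classical
  have this : ∀ h : G, zpowers h = zpowers g ↔ h ∈ zpowers g ∧ orderOf h = orderOf g := by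
    intro h
    constructor
    · intro he
      exact ⟨he ▸ mem_zpowers h, by rw [← Nat.card_zpowers, ← Nat.card_zpowers, he]⟩
    · rintro ⟨hm, ho⟩
      refine Subgroup.eq_of_le_of_card_ge (zpowers_le.mpr hm) ?_
      rw [Nat.card_zpowers, Nat.card_zpowers, ho]
  have e : {h : G // zpowers h = zpowers g} ≃ {a : ↥(zpowers g) // orderOf a = orderOf g} :=
    { toFun := fun h => ⟨⟨h.1, ((this h.1).mp h.2).1⟩,
        (orderOf_injective (zpowers g).subtype (Subgroup.subtype_injective _) _).symm.trans
          ((this h.1).mp h.2).2⟩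
      invFun := fun a => ⟨a.1.1, (this a.1.1).mpr ⟨a.1.2,
        (orderOf_injective (zpowers g).subtype (Subgroup.subtype_injective _) a.1).trans a.2⟩⟩
      left_inv := fun h => rfl
      right_inv := fun a => rfl }
  rw [Nat.card_congr e]
  have hc : IsCyclic (zpowers g) := by
    refine ⟨⟨⟨g, mem_zpowers g⟩, fun x => ?_⟩⟩
    obtain ⟨k, hk⟩ := x.2
    exact ⟨k, Subtype.ext (by push_cast; exact hk)⟩
  have : Fintype ↥(zpowers g) := Fintype.ofFinite _
  have hd : orderOf g ∣ Fintype.card ↥(zpowers g) := by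
    rw [Fintype.card_eq_nat_card, Nat.card_zpowers]
  have h2 := IsCyclic.card_orderOf_eq_totient (α := ↥(zpowers g)) hd
  rw [Nat.card_eq_fintype_card, Fintype.card_subtype, ← h2]

private lemma relindex_eq_card {G : Type} [Group G] [Finite G] (g : G) :
    (Subgroup.centralizer {g}).relIndex (normalizer (zpowers g : Set G))
      = Nat.card {h : G // zpowers h = zpowers g ∧ IsConj g h} := by
  set N := normalizer (zpowers g : Set G)
  set C := (Subgroup.centralizer {g}).subgroupOf N
  have key : Function.Bijective (Quotient.lift
      (fun n : N => (⟨(n : G) * g * (n : G)⁻¹,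
        zpowers_conj_of_mem_normalizer n.2,
        isConj_iff.mpr ⟨n, rfl⟩⟩ : {h : G // zpowers h = zpowers g ∧ IsConj g h}))
      (fun n m hnm => by
        have hc : ((n : G)⁻¹ * m) ∈ Subgroup.centralizer {g} :=
          (QuotientGroup.leftRel_apply (s := C)).mp hnm
        rw [Subgroup.mem_centralizer_singleton_iff] at hc
        ext
        show (n : G) * g * (n : G)⁻¹ = (m : G) * g * (m : G)⁻¹
        have : g * ((n : G)⁻¹ * m) = ((n : G)⁻¹ * m) * g := hc.symm
        calc (n : G) * g * (n : G)⁻¹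
            = (n : G) * (g * ((n : G)⁻¹ * m)) * (m : G)⁻¹ := by group
          _ = (n : G) * (((n : G)⁻¹ * m) * g) * (m : G)⁻¹ := by rw [this]
          _ = (m : G) * g * (m : G)⁻¹ := by group) : (N ⧸ C) → _) := by
    constructor
    · intro a b
      refine Quotient.inductionOn₂ a b (fun n m h => ?_)
      have h' : (n : G) * g * (n : G)⁻¹ = (m : G) * g * (m : G)⁻¹ := congrArg Subtype.val h
      refine Quotient.sound ((QuotientGroup.leftRel_apply (s := C)).mpr ?_)
      show ((n : G)⁻¹ * m) ∈ Subgroup.centralizer {g}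
      rw [Subgroup.mem_centralizer_singleton_iff]
      have : g * (n : G)⁻¹ * m = (n : G)⁻¹ * m * g := by
        have := h'
        calc g * (n : G)⁻¹ * m = (n : G)⁻¹ * ((n : G) * g * (n : G)⁻¹) * m := by group
          _ = (n : G)⁻¹ * ((m : G) * g * (m : G)⁻¹) * m := by rw [h']
          _ = (n : G)⁻¹ * m * g := by group
      rw [← this]; group
    · rintro ⟨h, hzp, hconj⟩
      obtain ⟨c, hc⟩ := isConj_iff.mp hconj
      have hcn : c ∈ N := mem_normalizer_of_conj (hc ▸ hzp)
      exact ⟨QuotientGroup.mk (⟨c, hcn⟩ : N), Subtype.ext hc⟩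
  rw [Subgroup.relIndex, Subgroup.index]
  exact Nat.card_eq_of_bijective _ key

/-- Every generator of `⟨g⟩` is conjugate to `g` iff
`[N_G(⟨g⟩) : C_G(g)] = φ(|g|)`. -/
theorem generators_conjugate_iff_relindex_totient (G : Type) [Group G] [Finite G] (g : G) :
    (∀ h : G, Subgroup.zpowers h = Subgroup.zpowers g → IsConj g h) ↔
      (Subgroup.centralizer {g}).relIndex (Subgroup.normalizer (Subgroup.zpowers g : Set G))
        = Nat.totient (orderOf g) := by
  rw [relindex_eq_card g, ← card_generators g]
  constructor
  · intro hall
    exact Nat.card_congr (Equiv.subtypeEquivRight fun h =>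
      ⟨fun hp => hp.1, fun hp => ⟨hp, hall h hp⟩⟩)
  · intro hcard h hzp
    have hsub : {h : G | zpowers h = zpowers g ∧ IsConj g h} ⊆ {h : G | zpowers h = zpowers g} :=
      fun x hx => hx.1
    have h1 : Nat.card {h : G // zpowers h = zpowers g ∧ IsConj g h}
        = ({h : G | zpowers h = zpowers g ∧ IsConj g h} : Set G).ncard :=
      (Nat.card_coe_set_eq _).symm
    have h2 : Nat.card {h : G // zpowers h = zpowers g}
        = ({h : G | zpowers h = zpowers g} : Set G).ncard :=
      (Nat.card_coe_set_eq _).symm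
    have heq := Set.eq_of_subset_of_ncard_le hsub
      (by rw [← h1, ← h2, hcard]) (Set.toFinite _)
    have : h ∈ {h : G | zpowers h = zpowers g ∧ IsConj g h} := heq ▸ hzp
    exact this.2
end

section
/- Let G be a finite group such that for every g ∈ G, every generator of ⟨g⟩ is conjugate to g in G (G is rational). Then every quotient of G by a normal subgroup is also rational. -/
/-- A quotient of a finite rational group is rational. -/
theorem quotient_of_rational_is_rational (G : Type) [Group G] [Finite G]
    (hG : ∀ g h : G, Subgroup.zpowers h = Subgroup.zpowers g → IsConj g h)
    (N : Subgroup G) [N.Normal] :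
    ∀ g h : G ⧸ N, Subgroup.zpowers h = Subgroup.zpowers g → IsConj g h := by
  intro g h hzp
  obtain ⟨n, hn⟩ : h ∈ Submonoid.powers g :=
    (isOfFinOrder_of_finite g).mem_powers_iff_mem_zpowers.mpr
      (hzp ▸ Subgroup.mem_zpowers h)
  have hordh : orderOf h = orderOf g := by
    rw [← Nat.card_zpowers, ← Nat.card_zpowers, hzp]
  have hgpos : 0 < orderOf g := (isOfFinOrder_of_finite g).orderOf_pos
  have hcop : Nat.Coprime n (orderOf g) := by
    have := orderOf_pow (n := n) g
    simp only [] at hn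
    rw [hn, hordh] at this
    have h1 : Nat.gcd (orderOf g) n = 1 := by
      rcases (Nat.div_eq_self.mp this.symm) with h0 | h1
      · omega
      · exact h1
    exact Nat.Coprime.symm h1
  obtain ⟨a, rfl⟩ := Quotient.exists_rep g
  have hdvd : orderOf (QuotientGroup.mk (s := N) a) ∣ orderOf a :=
    orderOf_map_dvd (QuotientGroup.mk' N) a
  have hapos : 0 < orderOf a := (isOfFinOrder_of_finite a).orderOf_pos
  haveI : NeZero (orderOf a) := ⟨hapos.ne'⟩
  haveI : NeZero (orderOf (QuotientGroup.mk (s := N) a)) := ⟨hgpos.ne'⟩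
  obtain ⟨u, hu⟩ := ZMod.unitsMap_surjective hdvd (ZMod.unitOfCoprime n hcop)
  set M : ℕ := ((u : ZMod (orderOf a)).val) with hM
  have hMcop : Nat.Coprime M (orderOf a) := ZMod.val_coe_unit_coprime u
  -- M ≡ n mod orderOf g
  have hmod : (M : ZMod (orderOf (QuotientGroup.mk (s := N) a))) = (n : _) := by
    have : ((ZMod.unitsMap hdvd u : (ZMod (orderOf (QuotientGroup.mk (s := N) a)))ˣ) :
        ZMod (orderOf (QuotientGroup.mk (s := N) a))) = (n : _) := by
      rw [hu, ZMod.coe_unitOfCoprime]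
    rw [ZMod.unitsMap_def, Units.coe_map] at this
    simpa [hM, ZMod.natCast_val, ZMod.castHom_apply] using this
  -- zpowers (a^M) = zpowers a
  have hzpa : Subgroup.zpowers (a ^ M) = Subgroup.zpowers a := by
    refine Subgroup.eq_of_le_of_card_ge ?_ ?_
    · rw [Subgroup.zpowers_le]
      exact Subgroup.pow_mem _ (Subgroup.mem_zpowers a) M
    · rw [Nat.card_zpowers, Nat.card_zpowers, Nat.Coprime.orderOf_pow hMcop.symm]
  have hconj : IsConj a (a ^ M) := hG a (a ^ M) hzpa
  have : IsConj (QuotientGroup.mk (s := N) a) (QuotientGroup.mk (s := N) a ^ M) := by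
    simpa using (QuotientGroup.mk' N).map_isConj hconj
  have heq : (QuotientGroup.mk (s := N) a) ^ M = h := by
    rw [← hn]
    exact pow_eq_pow_iff_modEq.mpr ((ZMod.natCast_eq_natCast_iff _ _ _).mp hmod)
  rwa [heq] at this
end

section
/- Let H be a finite group acting linearly on W = 𝔽₅² such that the image of H in GL(2,5) is isomorphic to SL(2,3) with its natural embedding, and such that for every nonzero w ∈ W there is h ∈ H with w·h = 2w. Then the action of the image of H on the nonzero vectors of W is transitive. -/
open Matrix

instance : DecidableEq (Matrix.SpecialLinearGroup (Fin 2) (ZMod 3)) :=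
  inferInstance

/-- In SL(2,3), any element of square one is identity or central. -/
lemma sl23_sq_central : ∀ x : Matrix.SpecialLinearGroup (Fin 2) (ZMod 3),
    x ^ 2 = 1 → x = 1 ∨ (∀ y, x * y = y * x) := by decide

set_option maxRecDepth 10000 in
/-- An order-3 matrix over 𝔽₅ fixing a vector: vector is zero or matrix is one. -/
lemma order3_fix : ∀ M : Matrix (Fin 2) (Fin 2) (ZMod 5), M ^ 3 = 1 →
    ∀ v : Fin 2 → ZMod 5, Matrix.vecMul v M = v → v = 0 ∨ M = 1 := by decide

lemma card_sl23 : Nat.card (Matrix.SpecialLinearGroup (Fin 2) (ZMod 3)) = 24 := by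
  rw [Nat.card_eq_fintype_card]; decide

lemma card_nonzero : Nat.card {w : Fin 2 → ZMod 5 // w ≠ 0} = 24 := by
  rw [Nat.card_eq_fintype_card]; decide

/-- If a finite group `H` acts linearly on `W = 𝔽₅²` with image isomorphic to `SL(2,3)` and
acting irreducibly, and every nonzero `w ∈ W` satisfies `w·h = 2w` for some `h ∈ H`, then
the action of `H` on `W \ {0}` is transitive. -/
theorem transitive_on_nonzero_vectors (H : Type) [Group H] [Finite H]
    (ρ : H →* Matrix.GeneralLinearGroup (Fin 2) (ZMod 5))
    (hiso : Nonempty (ρ.range ≃* Matrix.SpecialLinearGroup (Fin 2) (ZMod 3)))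
    (hirr : ∀ U : Submodule (ZMod 5) (Fin 2 → ZMod 5),
      (∀ g : H, ∀ u ∈ U, Matrix.vecMul u ((ρ g : Matrix (Fin 2) (Fin 2) (ZMod 5))) ∈ U) →
        U = ⊥ ∨ U = ⊤)
    (hev : ∀ w : Fin 2 → ZMod 5, w ≠ 0 →
      ∃ h : H, Matrix.vecMul w ((ρ h : Matrix (Fin 2) (Fin 2) (ZMod 5))) = (2 : ZMod 5) • w) :
    ∀ v w : Fin 2 → ZMod 5, v ≠ 0 → w ≠ 0 →
      ∃ h : H, Matrix.vecMul v ((ρ h : Matrix (Fin 2) (Fin 2) (ZMod 5))) = w := by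
  obtain ⟨e⟩ := hiso
  haveI : Finite ρ.range := Finite.of_equiv _ e.symm.toEquiv
  have hcard : Nat.card ρ.range = 24 := by
    rw [Nat.card_congr e.toEquiv, card_sl23]
  intro v w hv hw
  -- matrix of an element of the range
  set mat : ρ.range → Matrix (Fin 2) (Fin 2) (ZMod 5) := fun g => ((g : Matrix.GeneralLinearGroup (Fin 2) (ZMod 5)) : Matrix (Fin 2) (Fin 2) (ZMod 5)) with hmat
  have mat_mul : ∀ g₁ g₂ : ρ.range, mat (g₁ * g₂) = mat g₁ * mat g₂ := by
    intro g₁ g₂; simp [hmat]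
  have mat_one : mat 1 = 1 := by simp [hmat]
  have mat_pow : ∀ (g : ρ.range) (k : ℕ), mat (g ^ k) = (mat g) ^ k := by
    intro g k
    induction k with
    | zero => simpa using mat_one
    | succ n ih => rw [pow_succ, pow_succ, ← ih, mat_mul]
  have mat_inj : Function.Injective mat := by
    intro a b hab
    exact Subtype.ext (Units.ext hab)
  -- triviality of the stabilizer of v
  have stab : ∀ g : ρ.range, Matrix.vecMul v (mat g) = v → g = 1 := by
    intro g hg
    by_contra hg1
    have hord : orderOf g ∣ 24 := hcard ▸ orderOf_dvd_natCard g
    have hordne : orderOf g ≠ 1 := by simpa using hg1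
    obtain ⟨p, hp, hpd⟩ := Nat.exists_prime_and_dvd hordne
    have hp24 : p ∣ 24 := hpd.trans hord
    have hp23 : p = 2 ∨ p = 3 := by
      have h2 := hp.two_le
      have h24 : p ≤ 24 := Nat.le_of_dvd (by norm_num) hp24
      interval_cases p <;> revert hp hp24 <;> decide
    set s : ρ.range := g ^ (orderOf g / p) with hs
    have hordpos : 0 < orderOf g := orderOf_pos g
    have hsp : s ^ p = 1 := by
      rw [hs, ← pow_mul, Nat.div_mul_cancel hpd, pow_orderOf_eq_one]
    have hs1 : s ≠ 1 := by
      intro h1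
      have hdvd2 : orderOf g ∣ orderOf g / p := orderOf_dvd_of_pow_eq_one (hs ▸ h1)
      have hqpos : 0 < orderOf g / p :=
        Nat.div_pos (Nat.le_of_dvd hordpos hpd) hp.pos
      have h3 := Nat.le_of_dvd hqpos hdvd2
      have hlt := Nat.div_lt_self hordpos hp.one_lt
      omega
    -- s fixes v
    have hsv : Matrix.vecMul v (mat s) = v := by
      rw [hs, mat_pow]
      generalize (orderOf g / p) = k
      induction k with
      | zero => simp
      | succ n ih => rw [pow_succ, ← Matrix.vecMul_vecMul, ih, hg]
    rcases hp23 with rfl | rfl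
    · -- p = 2 : s maps to a central element of SL(2,3)
      have hx : (e s) ^ 2 = 1 := by rw [← _root_.map_pow, hsp, _root_.map_one]
      rcases sl23_sq_central (e s) hx with h1 | hcent
      · exact hs1 (e.injective (by rw [h1, _root_.map_one]))
      · -- s is central in ρ.range, hence mat s commutes with every ρ h
        have hscomm : ∀ t : ρ.range, s * t = t * s := by
          intro t
          apply e.injective
          rw [_root_.map_mul, _root_.map_mul, hcent (e t)]
        have hMcomm : ∀ h : H, mat s * ((ρ h : Matrix (Fin 2) (Fin 2) (ZMod 5))) =
            ((ρ h : Matrix (Fin 2) (Fin 2) (ZMod 5))) * mat s := by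
          intro h
          have ht : ρ h ∈ ρ.range := ⟨h, rfl⟩
          have := hscomm ⟨ρ h, ht⟩
          have := congrArg mat this
          rw [mat_mul, mat_mul] at this
          simpa [hmat] using this
        -- fixed space of mat s is invariant
        set U : Submodule (ZMod 5) (Fin 2 → ZMod 5) :=
          LinearMap.ker ((mat s).vecMulLinear - LinearMap.id) with hU
        have hmem : ∀ u, u ∈ U ↔ Matrix.vecMul u (mat s) = u := by
          intro u
          rw [hU, LinearMap.mem_ker, LinearMap.sub_apply, LinearMap.id_apply,
            Matrix.vecMulLinear_apply, sub_eq_zero]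
        have hUinv : ∀ g' : H, ∀ u ∈ U,
            Matrix.vecMul u ((ρ g' : Matrix (Fin 2) (Fin 2) (ZMod 5))) ∈ U := by
          intro g' u hu
          rw [hmem] at hu ⊢
          rw [Matrix.vecMul_vecMul, ← hMcomm g', ← Matrix.vecMul_vecMul, hu]
        rcases hirr U hUinv with hbot | htop
        · exact hv (by simpa [hbot] using (hmem v).mpr hsv)
        · have hM1 : mat s = 1 := by
            ext i j
            have h4 := (hmem (Pi.single i 1)).mp (htop ▸ Submodule.mem_top)
            have h5 := congrFun h4 j
            rw [Matrix.single_one_vecMul] at h5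
            rw [show mat s i j = (mat s).row i j from rfl, h5]
            simp [Matrix.one_apply, Pi.single_apply, eq_comm]
          exact hs1 (mat_inj (by rw [hM1, mat_one]))
    · -- p = 3
      have hM3 : (mat s) ^ 3 = 1 := by rw [← mat_pow, hsp, mat_one]
      rcases order3_fix (mat s) hM3 v hsv with h0 | h1
      · exact hv h0
      · exact hs1 (mat_inj (by rw [h1, mat_one]))
  -- the orbit map is injective
  have φinj : Function.Injective (fun g : ρ.range => Matrix.vecMul v (mat g)) := by
    intro g₁ g₂ h12
    dsimp only at h12
    have : Matrix.vecMul v (mat (g₁ * g₂⁻¹)) = v := by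
      rw [mat_mul, ← Matrix.vecMul_vecMul, h12, Matrix.vecMul_vecMul, ← mat_mul,
        mul_inv_cancel, mat_one, Matrix.vecMul_one]
    have := stab _ this
    rwa [mul_inv_eq_one] at this
  -- counting
  set A : Set (Fin 2 → ZMod 5) := Set.range (fun g : ρ.range => Matrix.vecMul v (mat g)) with hA
  set B : Set (Fin 2 → ZMod 5) := {u | u ≠ 0} with hB
  have hAB : A ⊆ B := by
    rintro u ⟨g, rfl⟩
    intro h0
    dsimp only at h0
    apply hv
    have : Matrix.vecMul (Matrix.vecMul v (mat g)) (mat g⁻¹) = v := by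
      rw [Matrix.vecMul_vecMul, ← mat_mul, mul_inv_cancel, mat_one, Matrix.vecMul_one]
    rw [h0] at this
    rw [← this, Matrix.zero_vecMul]
  have hcardA : Nat.card A = 24 := by
    rw [hA, Nat.card_range_of_injective φinj, hcard]
  have hcardB : Nat.card B = 24 := card_nonzero
  have hBfin : B.Finite := Set.toFinite B
  have hAeqB : A = B := by
    apply Set.eq_of_subset_of_ncard_le hAB _ hBfin
    rw [← Nat.card_coe_set_eq, ← Nat.card_coe_set_eq, hcardA, hcardB]
  have hwA : w ∈ A := by rw [hAeqB]; exact hw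
  obtain ⟨g, hg⟩ := hwA
  obtain ⟨h, hh⟩ := g.2
  refine ⟨h, ?_⟩
  rw [← hg]
  simp only [hmat]
  rw [hh]
end

section
/- The group SL(2,3) admits a presentation with generators i, a and relations i⁴ = 1, a³ = 1, i^{a²}·i^{a}·i = 1, and i² central: precisely, if a group G is generated by elements i and a with |i| = 4, |a| = 3, i² commuting with a, and a⁻²ia²·a⁻¹ia·i = 1, and i^a ∉ {i, i⁻¹}, then G ≅ SL(2,3). -/
section Key
variable {H : Type*} [Group H]

theorem sl23_key (x y : H) (h4 : x^4 = 1) (h3 : y^3 = 1)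
    (hc : Commute (x^2) y)
    (hr : ((y*y)⁻¹ * x * (y*y)) * (y⁻¹ * x * y) * x = 1)
    (hgen : Subgroup.closure ({x,y} : Set H) = ⊤) :
    ∀ g : H, ∃ t : Fin 4 × Fin 2 × Fin 3,
      g = x^(t.1:ℕ) * (y⁻¹*x*y)^((t.2.1:ℕ)) * y^(t.2.2:ℕ) := by
  set j := y⁻¹ * x * y with hj
  -- x^2 is central
  have hcen : ∀ g : H, (x*x) * g = g * (x*x) := by
    have hle : Subgroup.closure ({x,y} : Set H) ≤ Subgroup.centralizer {x^2} := by
      rw [Subgroup.closure_le]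
      intro g hg
      rw [SetLike.mem_coe, Subgroup.mem_centralizer_iff]
      intro h hh
      rw [Set.mem_singleton_iff] at hh
      subst hh
      simp only [Set.mem_insert_iff, Set.mem_singleton_iff] at hg
      rcases hg with rfl | rfl
      · exact ((Commute.refl g).pow_left 2).eq
      · exact hc.eq
    rw [hgen] at hle
    intro g
    have := Subgroup.mem_centralizer_iff.mp (hle (Subgroup.mem_top g)) _ rfl
    rw [pow_two] at this
    exact this
  have h4' : x*(x*(x*x)) = 1 := by
    have := h4; rw [show (4:ℕ) = 3+1 by rfl, pow_succ, pow_succ, pow_succ, pow_succ, pow_zero] at this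
    rw [← this]; group
  have h3' : y*(y*y) = 1 := by
    have := h3; rw [show (3:ℕ) = 2+1 by rfl, pow_succ, pow_succ, pow_succ, pow_zero] at this
    rw [← this]; group
  have hx3 : x⁻¹ = x*(x*x) := inv_eq_of_mul_eq_one_right (by rw [← h4'])
  have hy2 : y⁻¹ = y*y := inv_eq_of_mul_eq_one_right (by rw [← h3'])
  have hconj2 : y⁻¹ * ((x*x) * y) = x*x := by
    rw [hcen y, ← mul_assoc, inv_mul_cancel, one_mul]
  have hj2 : j * j = x*x := by
    rw [hj, show (y⁻¹*x*y)*(y⁻¹*x*y) = y⁻¹ * ((x*x) * y) by group, hconj2]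
  have hjinv : j⁻¹ = (x*x) * j := inv_eq_of_mul_eq_one_left
    (by rw [mul_assoc, hj2, ← h4']; group)
  have hk : y⁻¹ * j * y = x * j := by
    have hU : (y*y)⁻¹ * x * (y*y) = x⁻¹ * j⁻¹ := by
      have h2 : ((y*y)⁻¹ * x * (y*y)) * (j * x) = (x⁻¹ * j⁻¹) * (j * x) := by
        rw [show (x⁻¹*j⁻¹)*(j*x) = 1 by group, ← mul_assoc, hr]
      exact mul_right_cancel h2
    calc y⁻¹ * j * y = (y*y)⁻¹ * x * (y*y) := by rw [hj]; group
    _ = x⁻¹ * j⁻¹ := hU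
    _ = x * j := by rw [hjinv, hx3, show (x*(x*x))*((x*x)*j) = (x*(x*(x*x)))*(x*j) by group,
                        h4', one_mul]
  have hkk : (x*j)*(x*j) = x*x := by
    rw [← hk, show (y⁻¹*j*y)*(y⁻¹*j*y) = y⁻¹*((j*j)*y) by group, hj2, hconj2]
  have hjxj : j * (x * j) = x := by
    have h5 : x⁻¹ * ((x*j)*(x*j)) = x⁻¹ * (x*x) := by rw [hkk]
    calc j * (x * j) = x⁻¹ * ((x*j)*(x*j)) := by group
    _ = x⁻¹ * (x*x) := h5
    _ = x := by group
  have hjx : j * x = x⁻¹ * j := by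
    have h6 : (j * (x * j)) * j⁻¹ = x * j⁻¹ := by rw [hjxj]
    calc j * x = (j * (x * j)) * j⁻¹ := by group
    _ = x * j⁻¹ := h6
    _ = x⁻¹ * j := by rw [hjinv, hx3]; group
  have hyx : y * x = x * (j * y) := by
    have h7 : (y*y)⁻¹ * x * (y*y) = x * j := by
      rw [← hk, hj]; group
    rw [← hy2, inv_inv] at h7
    calc y * x = (y * x * y⁻¹) * y := by group
    _ = (x * j) * y := by rw [h7]
    _ = x * (j * y) := by rw [mul_assoc]
  have h2x : (y*y) * x = j * (y*y) := by
    rw [← hy2, hj]; group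
  have hx1 : ∀ m : Fin 4, x^(((m+1):Fin 4):ℕ) = x^(m:ℕ) * x := by
    intro m; rw [Fin.val_add, Fin.val_one, ← pow_eq_pow_mod _ h4, pow_succ]
  have hx2f : ∀ m : Fin 4, x^(((m+2):Fin 4):ℕ) = x^(m:ℕ) * (x*x) := by
    intro m
    rw [Fin.val_add, show ((2:Fin 4):ℕ) = 2 from rfl, ← pow_eq_pow_mod _ h4, pow_add, pow_two]
  have hx3f : ∀ m : Fin 4, x^(((m+3):Fin 4):ℕ) = x^(m:ℕ) * (x*(x*x)) := by
    intro m
    rw [Fin.val_add, show ((3:Fin 4):ℕ) = 3 from rfl, ← pow_eq_pow_mod _ h4, pow_add]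
    congr 1
    rw [pow_succ, pow_two, mul_assoc]
  set f : Fin 4 × Fin 2 × Fin 3 → H :=
    fun t => x ^ (t.1 : ℕ) * j ^ (t.2.1 : ℕ) * y ^ (t.2.2 : ℕ) with hf
  have e0k2 : ∀ m : Fin 4, f (m,0,2) * x = f (m,1,2) := by
    intro m
    simp only [hf, Fin.isValue, Fin.val_zero, Fin.val_one, pow_zero, pow_one, mul_one,
      one_mul, show ((2:Fin 3):ℕ) = 2 from rfl, pow_two, mul_assoc]
    congr 1
    rw [← mul_assoc, h2x]
  have hSx : ∀ t, ∃ t', f t * x = f t' := by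
    rintro ⟨m, e, k⟩
    fin_cases e <;> fin_cases k
    · exact ⟨(m+1, 0, 0), by
        simp only [hf, Fin.isValue, Fin.val_zero, pow_zero, mul_one, hx1]⟩
    · refine ⟨(m+1, 1, 1), ?_⟩
      simp only [hf, Fin.isValue, Fin.val_zero, Fin.val_one, pow_zero, pow_one, mul_one,
        one_mul, hx1, mul_assoc]
      congr 1
    · exact ⟨(m, 1, 2), e0k2 m⟩
    · refine ⟨(m+3, 1, 0), ?_⟩
      simp only [hf, Fin.isValue, Fin.val_zero, Fin.val_one, pow_zero, pow_one, mul_one,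
        hx3f, mul_assoc]
      congr 1
      rw [hjx, hx3]; group
    · refine ⟨(m+1, 0, 1), ?_⟩
      simp only [hf, Fin.isValue, Fin.val_zero, Fin.val_one, pow_zero, pow_one, mul_one,
        one_mul, hx1, mul_assoc]
      congr 1
      rw [hyx, show j * (x * (j * y)) = (j * (x * j)) * y by group, hjxj]
    · refine ⟨(m+2, 0, 2), ?_⟩
      simp only [hf, Fin.isValue, Fin.val_zero, Fin.val_one, pow_zero, pow_one, mul_one,
        one_mul, show ((2:Fin 3):ℕ) = 2 from rfl, pow_two, hx2f, mul_assoc]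
      congr 1
      have hyyx : y * (y * x) = j * (y * y) := by rw [← mul_assoc, h2x]
      rw [hyyx, ← mul_assoc, hj2, mul_assoc]
  have hSy : ∀ t, ∃ t', f t * y = f t' := by
    rintro ⟨m, e, k⟩
    fin_cases k
    · exact ⟨(m, e, 1), by
        simp only [hf, Fin.isValue, Fin.val_zero, Fin.val_one, pow_zero, pow_one, mul_one]⟩
    · exact ⟨(m, e, 2), by
        simp only [hf, Fin.isValue, Fin.val_one, pow_one,
          show ((2:Fin 3):ℕ) = 2 from rfl, pow_two, mul_assoc]⟩
    · exact ⟨(m, e, 0), by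
        simp only [hf, Fin.isValue, Fin.val_zero, pow_zero,
          show ((2:Fin 3):ℕ) = 2 from rfl, pow_two, mul_assoc, h3', mul_one]⟩
  -- the range of f is closed under right multiplication, hence is everything
  set S : Set H := Set.range f with hS
  have hfin : S.Finite := Set.finite_range f
  have hmul : ∀ z : H, (∀ t, ∃ t', f t * z = f t') → (fun s => s * z) '' S = S := by
    intro z hz
    apply Set.eq_of_subset_of_ncard_le
    · rintro _ ⟨_, ⟨t, rfl⟩, rfl⟩
      obtain ⟨t', ht'⟩ := hz t
      exact ⟨t', ht'.symm⟩
    · rw [Set.ncard_image_of_injective S (mul_left_injective z)]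
    · exact hfin
  let W : Subgroup H :=
  { carrier := {g : H | (fun s => s * g) '' S = S}
    one_mem' := by simp
    mul_mem' := by
      intro p q hp hq
      show (fun s => s * (p*q)) '' S = S
      have hcomp : (fun s : H => s * (p*q)) = (fun s => s * q) ∘ (fun s => s * p) := by
        funext s; simp [mul_assoc]
      rw [hcomp, Set.image_comp, hp, hq]
    inv_mem' := by
      intro p hp
      show (fun s => s * p⁻¹) '' S = S
      conv_lhs => rw [← hp]
      rw [← Set.image_comp]
      have hcomp : ((fun s : H => s * p⁻¹) ∘ (fun s => s * p)) = id := by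
        funext s; simp [mul_assoc]
      rw [hcomp, Set.image_id] }
  have hxW : x ∈ W := hmul x hSx
  have hyW : y ∈ W := hmul y hSy
  have hWtop : ∀ g : H, g ∈ W := by
    have hle : Subgroup.closure ({x,y} : Set H) ≤ W := by
      rw [Subgroup.closure_le]
      rintro g hg
      simp only [Set.mem_insert_iff, Set.mem_singleton_iff] at hg
      rcases hg with rfl | rfl
      · exact hxW
      · exact hyW
    rw [hgen] at hle
    exact fun g => hle (Subgroup.mem_top g)
  intro g
  have h1S : (1 : H) ∈ S := ⟨(0,0,0), by simp [hf]⟩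
  have hg : (fun s => s * g) '' S = S := hWtop g
  have : (1 : H) * g ∈ S := by
    rw [← hg]
    exact ⟨1, h1S, rfl⟩
  rw [one_mul] at this
  obtain ⟨t, ht⟩ := this
  exact ⟨t, ht.symm⟩

end Key

section SL23aux

abbrev SL23 := Matrix.SpecialLinearGroup (Fin 2) (ZMod 3)

instance : DecidableEq SL23 := fun a b =>
  decidable_of_iff (a.1 = b.1) Subtype.ext_iff.symm

def Imat : SL23 := ⟨!![0,1;2,0], by decide⟩
def Amat : SL23 := ⟨!![0,2;1,2], by decide⟩
def Nmat : SL23 := ⟨!![2,0;0,2], by decide⟩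

lemma hI4 : Imat^4 = 1 := by decide
lemma hA3 : Amat^3 = 1 := by decide
lemma hIA : Imat^2 * Amat = Amat * Imat^2 := by decide
lemma hIArel : ((Amat*Amat)⁻¹ * Imat * (Amat*Amat)) * (Amat⁻¹ * Imat * Amat) * Imat = 1 := by
  decide
lemma hI2N : Imat^2 = Nmat := by decide

lemma SL23_card : Nat.card SL23 = 24 := by
  rw [Nat.card_eq_fintype_card]
  decide

set_option maxHeartbeats 1000000 in
lemma SL23_decomp : ∀ g : SL23, ∃ m : Fin 4, ∃ e : Fin 2, ∃ k : Fin 3,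
    g = Imat^(m:ℕ) * (Amat⁻¹ * Imat * Amat)^(e:ℕ) * Amat^(k:ℕ) := by decide

set_option maxHeartbeats 1000000 in
lemma SL23_normal : ∀ x : SL23, x ≠ 1 →
    x = Nmat ∨ x^2 = Nmat ∨ x^3 = Nmat ∨ ∃ y : SL23, (x * (y*x⁻¹*y⁻¹))^2 = Nmat := by decide

end SL23aux

section Pres

def sl23Rels : Set (FreeGroup Bool) :=
  { FreeGroup.of true ^ 4, FreeGroup.of false ^ 3,
    FreeGroup.of true ^ 2 * FreeGroup.of false * (FreeGroup.of true ^ 2)⁻¹ *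
      (FreeGroup.of false)⁻¹,
    ((FreeGroup.of false * FreeGroup.of false)⁻¹ * FreeGroup.of true *
        (FreeGroup.of false * FreeGroup.of false)) *
      ((FreeGroup.of false)⁻¹ * FreeGroup.of true * FreeGroup.of false) * FreeGroup.of true }

abbrev P23 := PresentedGroup sl23Rels

def xP : P23 := PresentedGroup.of true
def yP : P23 := PresentedGroup.of false

lemma relP (r : FreeGroup Bool) (hrel : r ∈ sl23Rels) : PresentedGroup.mk sl23Rels r = 1 :=
  (QuotientGroup.eq_one_iff r).mpr (Subgroup.subset_normalClosure hrel)

lemma xP4 : xP^4 = 1 := by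
  have := relP (FreeGroup.of true ^ 4) (by simp [sl23Rels])
  rw [map_pow] at this
  exact this

lemma yP3 : yP^3 = 1 := by
  have := relP (FreeGroup.of false ^ 3) (by simp [sl23Rels])
  rw [map_pow] at this
  exact this

lemma commP : Commute (xP^2) yP := by
  have := relP _ (show FreeGroup.of true ^ 2 * FreeGroup.of false * (FreeGroup.of true ^ 2)⁻¹ *
      (FreeGroup.of false)⁻¹ ∈ sl23Rels by simp [sl23Rels])
  simp only [map_mul, map_inv, map_pow] at this
  have h := mul_eq_one_iff_eq_inv.mp this
  rw [inv_inv] at h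
  have h2 := mul_inv_eq_iff_eq_mul.mp h
  exact h2

lemma relP4 : ((yP*yP)⁻¹ * xP * (yP*yP)) * (yP⁻¹ * xP * yP) * xP = 1 := by
  have := relP _ (show ((FreeGroup.of false * FreeGroup.of false)⁻¹ * FreeGroup.of true *
        (FreeGroup.of false * FreeGroup.of false)) *
      ((FreeGroup.of false)⁻¹ * FreeGroup.of true * FreeGroup.of false) * FreeGroup.of true
      ∈ sl23Rels by simp [sl23Rels])
  simp only [map_mul, map_inv] at this
  exact this

lemma genP : Subgroup.closure ({xP, yP} : Set P23) = ⊤ := by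
  have h : Set.range (PresentedGroup.of : Bool → P23) = {xP, yP} := by
    ext z
    constructor
    · rintro ⟨b, rfl⟩
      cases b
      · right; rfl
      · left; rfl
    · rintro (rfl | rfl)
      · exact ⟨true, rfl⟩
      · exact ⟨false, rfl⟩
  rw [← h]
  exact PresentedGroup.closure_range_of sl23Rels

end Pres

/-- If a group `G` is generated by `i` of order 4 and `a` of order 3 with `i²` commuting
with `a`, `i^{a²}·i^{a}·i = 1` and `i^a ∉ {i, i⁻¹}`, then `G ≅ SL(2,3)`. -/
theorem presentation_of_sl23 (G : Type) [Group G] (i a : G)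
    (hi : orderOf i = 4) (ha : orderOf a = 3)
    (hcomm : Commute (i ^ 2) a)
    (hrel : ((a * a)⁻¹ * i * (a * a)) * (a⁻¹ * i * a) * i = 1)
    (hne : a⁻¹ * i * a ≠ i ∧ a⁻¹ * i * a ≠ i⁻¹)
    (hgen : Subgroup.closure ({i, a} : Set G) = ⊤) :
    Nonempty (G ≃* Matrix.SpecialLinearGroup (Fin 2) (ZMod 3)) := by
  have hi4 : i ^ 4 = 1 := by rw [← hi]; exact pow_orderOf_eq_one i
  have ha3 : a ^ 3 = 1 := by rw [← ha]; exact pow_orderOf_eq_one a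
  -- the homomorphism from the presented group to G
  have hφrels : ∀ r ∈ sl23Rels, FreeGroup.lift (fun b => if b then i else a) r = 1 := by
    intro r hr
    simp only [sl23Rels, Set.mem_insert_iff, Set.mem_singleton_iff] at hr
    rcases hr with rfl | rfl | rfl | rfl
    · simpa using hi4
    · simpa using ha3
    · have h := hcomm.eq
      simp only [map_mul, map_inv, map_pow, FreeGroup.lift_apply_of, eq_self_iff_true,
        Bool.false_eq_true, if_true, if_false]
      rw [h]; group
    · simp only [map_mul, map_inv, FreeGroup.lift_apply_of, eq_self_iff_true,
        Bool.false_eq_true, if_true, if_false]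
      exact hrel
  let φ : P23 →* G := PresentedGroup.toGroup hφrels
  have hφx : φ xP = i := PresentedGroup.toGroup.of hφrels
  have hφy : φ yP = a := PresentedGroup.toGroup.of hφrels
  have hφsurj : Function.Surjective φ := by
    rw [← MonoidHom.range_eq_top]
    rw [← top_le_iff, ← hgen, Subgroup.closure_le]
    rintro g (rfl | rfl)
    · exact ⟨xP, hφx⟩
    · exact ⟨yP, hφy⟩
  -- the homomorphism from the presented group to SL(2,3)
  have hψrels : ∀ r ∈ sl23Rels, FreeGroup.lift (fun b => if b then Imat else Amat) r = 1 := by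
    intro r hr
    simp only [sl23Rels, Set.mem_insert_iff, Set.mem_singleton_iff] at hr
    rcases hr with rfl | rfl | rfl | rfl
    · simpa using hI4
    · simpa using hA3
    · have h := hIA
      simp only [map_mul, map_inv, map_pow, FreeGroup.lift_apply_of, eq_self_iff_true,
        Bool.false_eq_true, if_true, if_false]
      rw [h]; group
    · simp only [map_mul, map_inv, FreeGroup.lift_apply_of, eq_self_iff_true,
        Bool.false_eq_true, if_true, if_false]
      exact hIArel
  let ψ : P23 →* SL23 := PresentedGroup.toGroup hψrels
  have hψx : ψ xP = Imat := PresentedGroup.toGroup.of hψrels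
  have hψy : ψ yP = Amat := PresentedGroup.toGroup.of hψrels
  have hψsurj : Function.Surjective ψ := by
    intro g
    obtain ⟨m, e, k, hg⟩ := SL23_decomp g
    refine ⟨xP^(m:ℕ) * (yP⁻¹ * xP * yP)^(e:ℕ) * yP^(k:ℕ), ?_⟩
    simp only [map_mul, map_inv, map_pow, hψx, hψy]
    exact hg.symm
  -- P23 has at most 24 elements
  have hkey := sl23_key xP yP xP4 yP3 commP relP4 genP
  let F : Fin 4 × Fin 2 × Fin 3 → P23 :=
    fun t => xP^(t.1:ℕ) * (yP⁻¹*xP*yP)^((t.2.1:ℕ)) * yP^(t.2.2:ℕ)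
  have hFsurj : Function.Surjective F := by
    intro g
    obtain ⟨t, ht⟩ := hkey g
    exact ⟨t, ht.symm⟩
  have hPfin : Finite P23 := Finite.of_surjective F hFsurj
  have hPcard : Nat.card P23 ≤ 24 := by
    have := Nat.card_le_card_of_surjective F hFsurj
    simpa using this
  -- ψ is bijective
  have hψbij : Function.Bijective ψ :=
    hψsurj.bijective_of_nat_card_le (by rw [SL23_card]; exact hPcard)
  let e : P23 ≃* SL23 := MulEquiv.ofBijective ψ hψbij
  have he : ∀ p : P23, e p = ψ p := fun p => rfl
  -- φ is injective
  have hi2 : i ^ 2 ≠ 1 := by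
    intro h
    have := orderOf_dvd_of_pow_eq_one h
    rw [hi] at this
    omega
  have hφinj : Function.Injective φ := by
    rw [injective_iff_map_eq_one]
    intro p hp
    by_contra hp1
    have hep : e p ≠ 1 := fun h => hp1 (by simpa using e.injective (h.trans (map_one e).symm))
    have hqN : ∃ q : P23, e q = Nmat ∧ φ q = 1 := by
      rcases SL23_normal (e p) hep with h | h | h | ⟨w, hw⟩
      · exact ⟨p, h, hp⟩
      · exact ⟨p^2, by rw [map_pow, h], by rw [map_pow, hp, one_pow]⟩
      · exact ⟨p^3, by rw [map_pow, h], by rw [map_pow, hp, one_pow]⟩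
      · refine ⟨(p * (e.symm w * p⁻¹ * (e.symm w)⁻¹))^2, ?_, ?_⟩
        · rw [map_pow]
          simp only [map_mul, map_inv, MulEquiv.apply_symm_apply]
          exact hw
        · rw [map_pow]
          simp only [map_mul, map_inv, hp, one_mul, inv_one, mul_one, mul_inv_cancel, one_pow]
    obtain ⟨q, hqe, hq1⟩ := hqN
    have hq : q = xP^2 := by
      apply e.injective
      rw [hqe, map_pow, he, hψx, hI2N]
    rw [hq, map_pow, hφx] at hq1
    exact hi2 hq1
  exact ⟨(MulEquiv.ofBijective φ ⟨hφinj, hφsurj⟩).symm.trans e⟩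
end
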